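/- arXiv:2406.03286 — 4 statements merged into one kernel-verified Lean document; each statement's English description precedes it below -/
import Mathlib

section
/- For every solution x(·) of the nonlinear multiagent system and all times s ≥ t ≥ 0, the maximal norm is nonincreasing: max_{1≤i≤N} |x_i(s)| ≤ max_{1≤i≤N} |x_i(t)|. -/
/-!
The squared maximal norm `M(t)² = maxᵢ ‖xᵢ(t)‖²` is Lipschitz, hence absolutely continuous, so it
is the integral of its a.e. derivative. Wherever that derivative exists, it equals the derivative
`2⟪xᵢ, ẋᵢ⟫` of `‖xᵢ‖²` for an agent `i` of maximal norm, since `‖xᵢ‖² ≤ M²` with equality at that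
time. The velocity of such an agent is a nonnegative combination of the vectors `xⱼ − xᵢ`, each
making an obtuse angle with `xᵢ` because `‖xⱼ‖ ≤ ‖xᵢ‖`. Hence the derivative is `≤ 0` a.e.
-/

open MeasureTheory Finset

noncomputable section

/-- Diameter of a configuration of `N` agents in `ℝ^d`. -/
def mDiam {N d : ℕ} (x : Fin N → EuclideanSpace ℝ (Fin d)) : ℝ :=
  ⨆ i : Fin N, ⨆ j : Fin N, ‖x i - x j‖

/-- Variance of a configuration of `N` agents in `ℝ^d`. -/
def mVar {N d : ℕ} (x : Fin N → EuclideanSpace ℝ (Fin d)) : ℝ :=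
  (N : ℝ)⁻¹ * ∑ i : Fin N, ‖x i - (N : ℝ)⁻¹ • ∑ k : Fin N, x k‖ ^ 2

/-- Admissible interaction signals: measurable, valued in `[0,1]` on `[0,∞)`. -/
def ValidSignal (N : ℕ) (a : Fin N → Fin N → ℝ → ℝ) : Prop :=
  ∀ i j, Measurable (a i j) ∧ ∀ t : ℝ, 0 ≤ t → a i j t ∈ Set.Icc (0 : ℝ) 1

/-- Admissible kernels: locally Lipschitz and positive on `[0,∞)`. -/
def ValidKernel (φ : ℝ → ℝ) : Prop :=
  LocallyLipschitz φ ∧ ∀ r : ℝ, 0 ≤ r → 0 < φ r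

/-- Solutions of the nonlinear multiagent system
`ẋ_i(t) = (1/N) ∑_j a_{ij}(t) φ(|x_i(t) − x_j(t)|)(x_j(t) − x_i(t))` for a.e. `t ≥ 0`,
as locally Lipschitz curves on `[0,∞)`. -/
def IsMASol {N d : ℕ} (a : Fin N → Fin N → ℝ → ℝ) (φ : ℝ → ℝ)
    (x : Fin N → ℝ → EuclideanSpace ℝ (Fin d)) : Prop :=
  (∀ i, ∀ r : ℝ, 0 < r → ∃ K : NNReal, LipschitzOnWith K (x i) (Set.Icc 0 r)) ∧
  (∀ᵐ t ∂(volume : Measure ℝ), 0 ≤ t → ∀ i, HasDerivAt (x i)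
    ((N : ℝ)⁻¹ • ∑ j : Fin N, (a i j t * φ ‖x i t - x j t‖) • (x j t - x i t)) t)

/-- The scrambling coefficient of an `N × N` matrix. -/
def scrambling {N : ℕ} (A : Fin N → Fin N → ℝ) : ℝ :=
  ⨅ i : Fin N, ⨅ j : Fin N, (N : ℝ)⁻¹ * ∑ k : Fin N, min (A i k) (A j k)

/-- Scrambling-persistent signals: the scrambling coefficient of the averaged matrix
over every window `[t, t+τ]` is at least `μ`. -/
def ScramblingPersistent (N : ℕ) (τ μ : ℝ) (a : Fin N → Fin N → ℝ → ℝ) : Prop :=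
  ValidSignal N a ∧
  ∀ t : ℝ, 0 ≤ t → μ ≤ scrambling (fun i j => τ⁻¹ * ∫ s in t..t + τ, a i j s)

/-- A matrix is balanced if its in- and out-degrees coincide. -/
def IsBalanced {N : ℕ} (A : Fin N → Fin N → ℝ) : Prop :=
  ∀ i, ∑ j : Fin N, A i j = ∑ j : Fin N, A j i

/-- The algebraic connectivity of a (balanced) matrix: the largest `λ` such that
`(1/(2N²)) ∑_{ij} a_{ij} |x_i − x_j|² ≥ λ V(x)` for all configurations `x`. -/
def lambda2 (d : ℕ) {N : ℕ} (A : Fin N → Fin N → ℝ) : ℝ :=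
  sSup {lam : ℝ | ∀ x : Fin N → EuclideanSpace ℝ (Fin d),
    lam * mVar x ≤ (2 * (N : ℝ) ^ 2)⁻¹ * ∑ i : Fin N, ∑ j : Fin N, A i j * ‖x i - x j‖ ^ 2}

/-- Connectivity-persistent balanced signals. -/
def ConnectivityPersistent (N d : ℕ) (τ μ : ℝ) (a : Fin N → Fin N → ℝ → ℝ) : Prop :=
  ValidSignal N a ∧
  (∀ᵐ t ∂(volume : Measure ℝ), 0 ≤ t → IsBalanced (fun i j => a i j t)) ∧
  ∀ t : ℝ, 0 ≤ t → μ ≤ lambda2 d (fun i j => τ⁻¹ * ∫ s in t..t + τ, a i j s)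

/-- Solutions of the linear multiagent system
`ẋ_i(t) = (1/N) ∑_j a_{ij}(t) (x_j(t) − x_i(t))` for a.e. `t ≥ 0`. -/
def IsLinSol {N d : ℕ} (a : Fin N → Fin N → ℝ → ℝ)
    (x : Fin N → ℝ → EuclideanSpace ℝ (Fin d)) : Prop :=
  (∀ i, ∀ r : ℝ, 0 < r → ∃ K : NNReal, LipschitzOnWith K (x i) (Set.Icc 0 r)) ∧
  (∀ᵐ t ∂(volume : Measure ℝ), 0 ≤ t → ∀ i, HasDerivAt (x i)
    ((N : ℝ)⁻¹ • ∑ j : Fin N, a i j t • (x j t - x i t)) t)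

open Set Filter Topology

theorem AbsolutelyContinuousOnInterval.le_of_ae_deriv_nonpos {f : ℝ → ℝ} {a b : ℝ}
    (hf : AbsolutelyContinuousOnInterval f a b) (hab : a ≤ b)
    (hderiv : ∀ᵐ x, x ∈ Icc a b → deriv f x ≤ 0) : f b ≤ f a := by
  have hint : 0 ≤ ∫ x in a..b, -deriv f x := by
    refine intervalIntegral.integral_nonneg_of_ae_restrict hab ?_
    rw [EventuallyLE, ae_restrict_iff' measurableSet_Icc]
    filter_upwards [hderiv] with x hx hmem
    simpa using hx hmem
  rw [intervalIntegral.integral_neg, hf.integral_deriv_eq_sub] at hint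
  linarith

theorem LipschitzOnWith.ciSup {α ι : Type*} [PseudoMetricSpace α] [Finite ι] [Nonempty ι]
    {f : ι → α → ℝ} {K : NNReal} {s : Set α} (hf : ∀ i, LipschitzOnWith K (f i) s) :
    LipschitzOnWith K (fun y => ⨆ i, f i y) s := by
  refine LipschitzOnWith.of_le_add_mul K fun y hy z hz => ciSup_le fun i => ?_
  calc f i y ≤ f i z + K * dist y z := by
        have := (hf i).dist_le_mul y hy z hz
        rw [Real.dist_eq] at this
        linarith [le_abs_self (f i y - f i z)]
    _ ≤ (⨆ i, f i z) + K * dist y z := by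
        gcongr
        exact le_ciSup (f := fun i => f i z) (finite_range _).bddAbove i

theorem HasDerivAt.eq_of_eventuallyLE_of_eq {f g : ℝ → ℝ} {f' g' x : ℝ}
    (hf : HasDerivAt f f' x) (hg : HasDerivAt g g' x) (hle : f ≤ᶠ[𝓝 x] g) (heq : f x = g x) :
    f' = g' := by
  have hmin : IsLocalMin (g - f) x := by
    filter_upwards [hle] with y hy
    simp only [Pi.sub_apply, heq, sub_self]
    linarith
  linarith [hmin.hasDerivAt_eq_zero (hg.sub hf)]

section
variable {E : Type*} [NormedAddCommGroup E] [InnerProductSpace ℝ E]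

theorem real_inner_sub_self_nonpos_of_norm_le {y z : E} (h : ‖y‖ ≤ ‖z‖) :
    inner ℝ z (y - z) ≤ 0 := by
  rw [inner_sub_right, real_inner_self_eq_norm_sq]
  nlinarith [real_inner_le_norm z y, norm_nonneg y]

theorem real_inner_sum_smul_sub_nonpos {ι : Type*} [Fintype ι] {z : ι → E} {w : ι → ℝ} {i : ι}
    (hw : ∀ j, 0 ≤ w j) (hi : ∀ j, ‖z j‖ ≤ ‖z i‖) :
    inner ℝ (z i) (∑ j, w j • (z j - z i)) ≤ 0 := by
  rw [inner_sum]
  refine Finset.sum_nonpos fun j _ => ?_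
  rw [real_inner_smul_right]
  exact mul_nonpos_of_nonneg_of_nonpos (hw j) (real_inner_sub_self_nonpos_of_norm_le (hi j))

theorem deriv_sq_iSup_norm_nonpos {ι : Type*} [Finite ι] [Nonempty ι] {x : ι → ℝ → E}
    {v : ι → E} {τ : ℝ} (hx : ∀ i, HasDerivAt (x i) (v i) τ)
    (hv : ∀ i, (∀ j, ‖x j τ‖ ≤ ‖x i τ‖) → inner ℝ (x i τ) (v i) ≤ 0) :
    deriv (fun y => (⨆ i, ‖x i y‖) ^ 2) τ ≤ 0 := by
  by_cases hdiff : DifferentiableAt ℝ (fun y => (⨆ i, ‖x i y‖) ^ 2) τ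
  · obtain ⟨i, hi⟩ := exists_eq_ciSup_of_finite (f := fun i => ‖x i τ‖)
    have hmax : ∀ j, ‖x j τ‖ ≤ ‖x i τ‖ := fun j =>
      hi ▸ le_ciSup (f := fun j => ‖x j τ‖) (finite_range _).bddAbove j
    have hle : ∀ y, ‖x i y‖ ^ 2 ≤ (⨆ j, ‖x j y‖) ^ 2 := fun y => by
      gcongr
      exact le_ciSup (f := fun j => ‖x j y‖) (finite_range _).bddAbove i
    have heq := (hx i).norm_sq.eq_of_eventuallyLE_of_eq hdiff.hasDerivAt
      (Eventually.of_forall hle) (by simp only [hi])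
    rw [← heq]
    linarith [hv i hmax]
  · rw [deriv_zero_of_not_differentiableAt hdiff]

end

theorem max_norm_nonincreasing_general {N d : ℕ}
    (a : Fin N → Fin N → ℝ → ℝ) (φ : ℝ → ℝ)
    (ha : ValidSignal N a) (hφ : ValidKernel φ)
    (x : Fin N → ℝ → EuclideanSpace ℝ (Fin d)) (hx : IsMASol a φ x)
    (t s : ℝ) (ht : 0 ≤ t) (hts : t ≤ s) :
    (⨆ i : Fin N, ‖x i s‖) ≤ ⨆ i : Fin N, ‖x i t‖ := by
  obtain hN | hN := isEmpty_or_nonempty (Fin N)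
  · simp
  have hlip : ∃ K, LipschitzOnWith K (fun y => ⨆ i, ‖x i y‖) (Icc t s) := by
    choose K hK using fun i => hx.1 i (s + 1) (by linarith)
    refine ⟨∑ i, K i, LipschitzOnWith.ciSup fun i => ?_⟩
    have hsub : Icc t s ⊆ Icc 0 (s + 1) := Icc_subset_Icc ht (by linarith)
    refine (lipschitzWith_one_norm.comp_lipschitzOnWith ((hK i).mono hsub)).weaken ?_
    simpa using Finset.single_le_sum (f := K) (fun _ _ => zero_le) (Finset.mem_univ i)
  obtain ⟨K, hK⟩ := hlip
  have hac : AbsolutelyContinuousOnInterval (fun y => (⨆ i, ‖x i y‖) ^ 2) t s := by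
    rw [← uIcc_of_le hts] at hK
    simp only [sq]
    exact hK.absolutelyContinuousOnInterval.mul hK.absolutelyContinuousOnInterval
  have hderiv : ∀ᵐ τ, τ ∈ Icc t s → deriv (fun y => (⨆ i, ‖x i y‖) ^ 2) τ ≤ 0 := by
    filter_upwards [hx.2] with τ hτ hmem
    have hτ0 : 0 ≤ τ := ht.trans hmem.1
    refine deriv_sq_iSup_norm_nonpos (hτ hτ0) fun i hi => ?_
    rw [real_inner_smul_right]
    exact mul_nonpos_of_nonneg_of_nonpos (by positivity) (real_inner_sum_smul_sub_nonpos
      (fun j => mul_nonneg ((ha i j).2 τ hτ0).1 (hφ.2 _ (norm_nonneg _)).le) hi)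
  have hsq := hac.le_of_ae_deriv_nonpos hts hderiv
  exact (pow_le_pow_iff_left₀ (Real.iSup_nonneg fun i => norm_nonneg _)
    (Real.iSup_nonneg fun i => norm_nonneg _) two_ne_zero).1 hsq

/-- Along any solution of the nonlinear multiagent system, the maximal norm
`max_i |x_i|` is nonincreasing on `[0,∞)`. -/
theorem max_norm_nonincreasing {N d : ℕ} (hN : 1 ≤ N)
    (a : Fin N → Fin N → ℝ → ℝ) (φ : ℝ → ℝ)
    (ha : ValidSignal N a) (hφ : ValidKernel φ)
    (x : Fin N → ℝ → EuclideanSpace ℝ (Fin d)) (hx : IsMASol a φ x)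
    (t s : ℝ) (ht : 0 ≤ t) (hts : t ≤ s) :
    (⨆ i : Fin N, ‖x i s‖) ≤ ⨆ i : Fin N, ‖x i t‖ :=
  max_norm_nonincreasing_general a φ ha hφ x hx t s ht hts
end
end

section
/- Let x(·) be a solution of the nonlinear multiagent system and let (i,j) be a pair of indices such that |x_i(t) − x_j(t)| = D(x(t)) at some time t ≥ 0. Then for every s ≥ t: (a) ⟨y, x_i(t) − x_j(t)⟩ < ⟨x_i(t), x_i(t) − x_j(t)⟩ for every y ∈ conv{x_1(s),…,x_N(s)} with y ≠ x_i(t); and (b) ⟨x_j(t), x_i(t) − x_j(t)⟩ < ⟨y, x_i(t) − x_j(t)⟩ for every y ∈ conv{x_1(s),…,x_N(s)} with y ≠ x_j(t). -/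
open MeasureTheory Finset

noncomputable section

/-! For a continuous linear functional `f`, the maximum of `f` over the agents is nonincreasing
along a solution. It is Lipschitz, hence the integral of its a.e. derivative; wherever it is
differentiable its derivative is that of an agent `k` attaining it, and `f (ẋ_k)` is a
nonnegative combination of the nonpositive numbers `f (x_l) - f (x_k)`. By Hahn–Banach the convex
hull of the configuration therefore shrinks in time. At time `t` this hull lies in the closed ball
of radius `|x_i(t) - x_j(t)|` around `x_j(t)`, on which `⟨·, x_i(t) - x_j(t)⟩` attains its maximum
only at `x_i(t)`; exchanging `i` and `j` gives the second inequality. -/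

theorem LipschitzOnWith.le_of_ae_hasDerivAt_nonpos {f : ℝ → ℝ} {K : NNReal} {a b : ℝ}
    (hab : a ≤ b) (hf : LipschitzOnWith K f (Set.Icc a b))
    (hf' : ∀ᵐ σ, σ ∈ Set.Ioo a b → ∀ f', HasDerivAt f f' σ → f' ≤ 0) :
    f b ≤ f a := by
  rw [← Set.uIcc_of_le hab] at hf
  have hFTC := hf.absolutelyContinuousOnInterval.integral_deriv_eq_sub
  suffices ∫ σ in a..b, deriv f σ ≤ 0 by linarith
  rw [intervalIntegral.integral_of_le hab]
  refine integral_nonpos_of_ae ?_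
  rw [Filter.EventuallyLE, ae_restrict_iff' measurableSet_Ioc]
  filter_upwards [hf', Measure.ae_ne volume b] with σ hσ hσb hσab
  by_cases hd : DifferentiableAt ℝ f σ
  · exact hσ ⟨hσab.1, hσab.2.lt_of_ne hσb⟩ _ hd.hasDerivAt
  · simp [deriv_zero_of_not_differentiableAt hd]

theorem LipschitzOnWith.finset_sup' {α ι : Type*} [PseudoMetricSpace α] {s : Finset ι}
    (hs : s.Nonempty) {g : ι → α → ℝ} {K : ι → NNReal} {t : Set α}
    (hg : ∀ k ∈ s, LipschitzOnWith (K k) (g k) t) :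
    LipschitzOnWith (s.sup K) (fun σ => s.sup' hs (g · σ)) t := by
  refine LipschitzOnWith.of_le_add_mul _ fun u hu w hw => Finset.sup'_le _ _ fun k hk => ?_
  calc g k u ≤ g k w + K k * dist u w := (hg k hk).le_add_mul hu hw
    _ ≤ s.sup' hs (g · w) + s.sup K * dist u w := by
      gcongr
      · exact Finset.le_sup' (g · w) hk
      · exact Finset.le_sup (f := K) hk

theorem Finset.sup'_le_sup'_of_ae_hasDerivAt_nonpos {ι : Type*} {s : Finset ι}
    (hs : s.Nonempty) {g : ι → ℝ → ℝ} {a b : ℝ} (hab : a ≤ b)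
    (hg : ∀ k ∈ s, ∃ K, LipschitzOnWith K (g k) (Set.Icc a b))
    (hg' : ∀ᵐ σ, σ ∈ Set.Ioo a b → ∀ k ∈ s, s.sup' hs (g · σ) = g k σ →
      ∃ g', HasDerivAt (g k) g' σ ∧ g' ≤ 0) :
    s.sup' hs (g · b) ≤ s.sup' hs (g · a) := by
  choose! K hK using hg
  refine (LipschitzOnWith.finset_sup' hs hK).le_of_ae_hasDerivAt_nonpos hab ?_
  filter_upwards [hg'] with σ hσ hσab F' hF'
  obtain ⟨k, hk, hmax⟩ := s.exists_mem_eq_sup' hs (g · σ)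
  obtain ⟨g', hg', hg'_nonpos⟩ := hσ hσab k hk hmax
  have hmin : IsLocalMin (fun τ => s.sup' hs (g · τ) - g k τ) σ :=
    Filter.Eventually.of_forall fun τ => by
      simp only [hmax, sub_self, sub_nonneg]
      exact s.le_sup' (g · τ) hk
  have := hmin.hasDerivAt_eq_zero (hF'.sub hg')
  linarith

theorem ContinuousLinearMap.map_sum_smul_sub_nonpos {E ι : Type*} [AddCommGroup E] [Module ℝ E]
    [TopologicalSpace E] (f : StrongDual ℝ E) (s : Finset ι) {w : ι → ℝ}
    (hw : ∀ l ∈ s, 0 ≤ w l) {p : ι → E} {q : E} (hq : ∀ l ∈ s, f (p l) ≤ f q) :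
    f (∑ l ∈ s, w l • (p l - q)) ≤ 0 := by
  simp only [map_sum, map_smul, map_sub, smul_eq_mul]
  exact Finset.sum_nonpos fun l hl => mul_nonpos_of_nonneg_of_nonpos (hw l hl)
    (sub_nonpos.2 (hq l hl))

theorem subset_convexHull_of_forall_exists_le {E : Type*} [NormedAddCommGroup E]
    [NormedSpace ℝ E] {P Q : Set E} (hQ : Q.Finite)
    (h : ∀ f : StrongDual ℝ E, ∀ y ∈ P, ∃ z ∈ Q, f y ≤ f z) : P ⊆ convexHull ℝ Q := by
  intro y hy
  by_contra hyQ
  obtain ⟨f, u, hfu, huy⟩ := geometric_hahn_banach_closed_point (convex_convexHull ℝ Q)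
    (hQ.isCompact_convexHull (𝕜 := ℝ)).isClosed hyQ
  obtain ⟨z, hz, hyz⟩ := h f y hy
  linarith [hfu z (subset_convexHull ℝ Q hz)]

theorem inner_lt_inner_of_norm_sub_le {E : Type*} [NormedAddCommGroup E]
    [InnerProductSpace ℝ E] {u w z : E} (h : ‖z - w‖ ≤ ‖u - w‖) (hzu : z ≠ u) :
    inner ℝ z (u - w) < inner ℝ u (u - w) := by
  have hpos : 0 < ‖(z - w) - (u - w)‖ ^ 2 := by
    rw [sub_sub_sub_cancel_right]
    exact pow_pos (norm_pos_iff.2 (sub_ne_zero.2 hzu)) 2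
  have hsq : ‖z - w‖ ^ 2 ≤ ‖u - w‖ ^ 2 := pow_le_pow_left₀ (norm_nonneg _) h 2
  rw [norm_sub_sq_real, inner_sub_left] at hpos
  have huu : inner ℝ (u - w) (u - w) = ‖u - w‖ ^ 2 := real_inner_self_eq_norm_sq _
  rw [inner_sub_left] at huu
  linarith

theorem norm_sub_le_mDiam {N d : ℕ} (x : Fin N → EuclideanSpace ℝ (Fin d)) (k l : Fin N) :
    ‖x k - x l‖ ≤ mDiam x :=
  le_ciSup_of_le (Set.finite_range _).bddAbove k
    (le_ciSup (f := fun l => ‖x k - x l‖) (Set.finite_range _).bddAbove l)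

theorem convexHull_subset_closedBall_of_norm_sub_eq_mDiam {N d : ℕ}
    {x : Fin N → EuclideanSpace ℝ (Fin d)} {i j : Fin N} (hij : ‖x i - x j‖ = mDiam x) :
    convexHull ℝ (Set.range x) ⊆ Metric.closedBall (x j) ‖x i - x j‖ :=
  convexHull_min
    (Set.range_subset_iff.2 fun k => mem_closedBall_iff_norm.2 (hij ▸ norm_sub_le_mDiam x k j))
    (convex_closedBall _ _)

section IsMASol

variable {N d : ℕ} {a : Fin N → Fin N → ℝ → ℝ} {φ : ℝ → ℝ}
  {x : Fin N → ℝ → EuclideanSpace ℝ (Fin d)}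

theorem IsMASol.exists_map_le_map (ha : ValidSignal N a) (hφ : ValidKernel φ)
    (hx : IsMASol a φ x) (f : StrongDual ℝ (EuclideanSpace ℝ (Fin d))) {t s : ℝ}
    (ht : 0 ≤ t) (hts : t ≤ s) (k : Fin N) :
    ∃ l, f (x k s) ≤ f (x l t) := by
  have hne : (univ : Finset (Fin N)).Nonempty := ⟨k, mem_univ k⟩
  have hmono : univ.sup' hne (fun l => f (x l s)) ≤ univ.sup' hne (fun l => f (x l t)) := by
    refine univ.sup'_le_sup'_of_ae_hasDerivAt_nonpos (g := fun l σ => f (x l σ)) hne hts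
      (fun l _ => ?_) ?_
    · obtain ⟨K, hK⟩ := hx.1 l (s + 1) (by linarith)
      exact ⟨_, f.lipschitz.comp_lipschitzOnWith
        (hK.mono (Set.Icc_subset_Icc ht (by linarith)))⟩
    · filter_upwards [hx.2] with σ hode hσ l _ hmax
      have hσ0 : 0 ≤ σ := ht.trans hσ.1.le
      have hw : ∀ m ∈ univ, 0 ≤ a l m σ * φ ‖x l σ - x m σ‖ := fun m _ =>
        mul_nonneg ((ha l m).2 σ hσ0).1 (hφ.2 _ (norm_nonneg _)).le
      refine ⟨_, f.hasFDerivAt.comp_hasDerivAt σ (hode hσ0 l), ?_⟩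
      rw [map_smul, smul_eq_mul]
      exact mul_nonpos_of_nonneg_of_nonpos (by positivity) (f.map_sum_smul_sub_nonpos _ hw
        fun m _ => hmax ▸ le_sup' (fun m => f (x m σ)) (mem_univ m))
  obtain ⟨l, -, hl⟩ := univ.exists_mem_eq_sup' hne (fun l => f (x l t))
  exact ⟨l, (le_sup' (fun l => f (x l s)) (mem_univ k)).trans (hmono.trans_eq hl)⟩

theorem IsMASol.convexHull_subset (ha : ValidSignal N a) (hφ : ValidKernel φ)
    (hx : IsMASol a φ x) {t s : ℝ} (ht : 0 ≤ t) (hts : t ≤ s) :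
    convexHull ℝ (Set.range fun k => x k s) ⊆ convexHull ℝ (Set.range fun k => x k t) := by
  refine convexHull_min (subset_convexHull_of_forall_exists_le (Set.finite_range _) ?_)
    (convex_convexHull ℝ _)
  rintro f _ ⟨k, rfl⟩
  obtain ⟨l, hl⟩ := hx.exists_map_le_map ha hφ f ht hts k
  exact ⟨_, ⟨l, rfl⟩, hl⟩

theorem IsMASol.inner_lt_of_mem_convexHull (ha : ValidSignal N a) (hφ : ValidKernel φ)
    (hx : IsMASol a φ x) {i j : Fin N} {t s : ℝ} (ht : 0 ≤ t)
    (hij : ‖x i t - x j t‖ = mDiam (fun k => x k t)) (hts : t ≤ s)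
    {y : EuclideanSpace ℝ (Fin d)} (hy : y ∈ convexHull ℝ (Set.range fun k => x k s))
    (hyi : y ≠ x i t) :
    inner ℝ y (x i t - x j t) < inner ℝ (x i t) (x i t - x j t) := by
  have hball : y ∈ Metric.closedBall (x j t) ‖x i t - x j t‖ :=
    convexHull_subset_closedBall_of_norm_sub_eq_mDiam (x := fun k => x k t) hij
      (hx.convexHull_subset ha hφ ht hts hy)
  exact inner_lt_inner_of_norm_sub_le (mem_closedBall_iff_norm.1 hball) hyi

end IsMASol

theorem diameter_maximisers_geometry_general {N d : ℕ}
    (a : Fin N → Fin N → ℝ → ℝ) (φ : ℝ → ℝ)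
    (ha : ValidSignal N a) (hφ : ValidKernel φ)
    (x : Fin N → ℝ → EuclideanSpace ℝ (Fin d)) (hx : IsMASol a φ x)
    (i j : Fin N) (t : ℝ) (ht : 0 ≤ t)
    (hij : ‖x i t - x j t‖ = mDiam (fun k => x k t))
    (s : ℝ) (hts : t ≤ s) :
    (∀ y ∈ convexHull ℝ (Set.range fun k => x k s), y ≠ x i t →
      (inner ℝ y (x i t - x j t) : ℝ) < (inner ℝ (x i t) (x i t - x j t) : ℝ)) ∧
    (∀ y ∈ convexHull ℝ (Set.range fun k => x k s), y ≠ x j t →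
      (inner ℝ (x j t) (x i t - x j t) : ℝ) < (inner ℝ y (x i t - x j t) : ℝ)) := by
  refine ⟨fun y hy hyi => hx.inner_lt_of_mem_convexHull ha hφ ht hij hts hy hyi,
    fun y hy hyj => ?_⟩
  have hji : ‖x j t - x i t‖ = mDiam (fun k => x k t) := by rwa [norm_sub_rev]
  have := hx.inner_lt_of_mem_convexHull ha hφ ht hji hts hy hyj
  rw [← neg_sub (x i t), inner_neg_right, inner_neg_right] at this
  linarith

/-- geometry of points maximising the diameter. If `(i,j)` realises the
diameter at time `t`, then for every `s ≥ t` the strict scalar product inequalities hold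
for every point of the convex hull of the configuration at time `s` other than `x_i(t)`
(resp. `x_j(t)`). -/
theorem diameter_maximisers_geometry {N d : ℕ} (hN : 1 ≤ N)
    (a : Fin N → Fin N → ℝ → ℝ) (φ : ℝ → ℝ)
    (ha : ValidSignal N a) (hφ : ValidKernel φ)
    (x : Fin N → ℝ → EuclideanSpace ℝ (Fin d)) (hx : IsMASol a φ x)
    (i j : Fin N) (t : ℝ) (ht : 0 ≤ t)
    (hij : ‖x i t - x j t‖ = mDiam (fun k => x k t))
    (s : ℝ) (hts : t ≤ s) :
    (∀ y ∈ convexHull ℝ (Set.range fun k => x k s), y ≠ x i t →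
      (inner ℝ y (x i t - x j t) : ℝ) < (inner ℝ (x i t) (x i t - x j t) : ℝ)) ∧
    (∀ y ∈ convexHull ℝ (Set.range fun k => x k s), y ≠ x j t →
      (inner ℝ (x j t) (x i t - x j t) : ℝ) < (inner ℝ y (x i t - x j t) : ℝ)) :=
  diameter_maximisers_geometry_general a φ ha hφ x hx i j t ht hij s hts
end
end

section
/- Let (A^n(·)) be any sequence in G_η(τ,μ). Then there exist a subsequence (not relabelled) and a signal A(·) ∈ G_η(τ,μ) such that, for each pair of indices (i,j) and every integrable function f ∈ L¹([0,∞),ℝ), one has ∫_0^∞ a^n_{ij}(t) f(t) dt → ∫_0^∞ a_{ij}(t) f(t) dt as n → ∞ (i.e., G_η(τ,μ) is sequentially compact for the weak-* topology of L^∞([0,∞), ℝ^{N×N})). -/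
open MeasureTheory Finset

noncomputable section

/-! Signals with values in `[0,1]` have monotone `1`-Lipschitz primitives. A pointwise
Arzelà–Ascoli argument makes a subsequence of the primitives converge pointwise; the limit is
again monotone and `1`-Lipschitz, so it is the primitive of its derivative `B`, a `[0,1]`-valued
signal. Hence every interval integral of the subsequence converges to that of `B`. As the signals
are uniformly bounded, Riemann sums and the density of continuous compactly supported functions
in `L¹` upgrade this to convergence against every integrable test function. The window averages
converge in particular, and the scrambling coefficient, an infimum of continuous functions, is
upper semicontinuous, so the persistence bound survives in the limit. -/

open Filter Topology
open scoped NNReal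

theorem tendsto_of_forall_dist_le {ι X : Type*} [PseudoMetricSpace X] {l : Filter ι}
    {φ : ι → X} {x : X}
    (h : ∀ ε > 0, ∃ (ψ : ι → X) (y : X), Tendsto ψ l (𝓝 y) ∧ (∀ i, dist (φ i) (ψ i) ≤ ε) ∧
      dist y x ≤ ε) :
    Tendsto φ l (𝓝 x) := by
  refine Metric.tendsto_nhds.2 fun ε hε => ?_
  obtain ⟨ψ, y, hψ, hφψ, hyx⟩ := h (ε / 3) (by positivity)
  filter_upwards [Metric.tendsto_nhds.1 hψ (ε / 3) (by positivity)] with i hi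
  linarith [dist_triangle4 (φ i) (ψ i) y x, hφψ i]

theorem intervalIntegrable_of_norm_le {E : Type*} [NormedAddCommGroup E] {f : ℝ → E} {C : ℝ}
    (hf : AEStronglyMeasurable f) (hC : ∀ t, ‖f t‖ ≤ C) (u v : ℝ) :
    IntervalIntegrable f volume u v :=
  ⟨Measure.integrableOn_of_bounded measure_Ioc_lt_top.ne hf (ae_of_all _ hC),
    Measure.integrableOn_of_bounded measure_Ioc_lt_top.ne hf (ae_of_all _ hC)⟩

theorem lipschitzWith_intervalIntegral {E : Type*} [NormedAddCommGroup E] [NormedSpace ℝ E]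
    {f : ℝ → E} {K : ℝ≥0} (hf : AEStronglyMeasurable f) (hK : ∀ t, ‖f t‖ ≤ K) (a : ℝ) :
    LipschitzWith K fun t => ∫ s in a..t, f s := by
  refine LipschitzWith.of_dist_le_mul fun x y => ?_
  rw [dist_eq_norm, intervalIntegral.integral_interval_sub_left
    (intervalIntegrable_of_norm_le hf hK _ _) (intervalIntegrable_of_norm_le hf hK _ _),
    Real.dist_eq]
  exact intervalIntegral.norm_integral_le_of_norm_le_const fun t _ => hK t

theorem monotone_intervalIntegral {f : ℝ → ℝ} (hf : ∀ u v, IntervalIntegrable f volume u v)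
    (h0 : ∀ t, 0 ≤ f t) (a : ℝ) : Monotone fun t => ∫ s in a..t, f s := fun u v huv => by
  rw [← sub_nonneg, intervalIntegral.integral_interval_sub_left (hf a v) (hf a u)]
  exact intervalIntegral.integral_nonneg huv fun t _ => h0 t

theorem deriv_mem_Icc_of_monotone_of_lipschitzWith {G : ℝ → ℝ} (hmono : Monotone G)
    (hlip : LipschitzWith 1 G) (t : ℝ) : deriv G t ∈ Set.Icc (0 : ℝ) 1 := by
  refine ⟨hmono.deriv_nonneg, ?_⟩
  simpa using (le_abs_self _).trans (norm_deriv_le_of_lipschitz hlip (x₀ := t))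

theorem norm_le_one_of_mem_Icc {x : ℝ} (hx : x ∈ Set.Icc (0 : ℝ) 1) : ‖x‖ ≤ 1 :=
  (Real.norm_of_nonneg hx.1).trans_le hx.2

theorem exists_tendsto_of_lipschitzWith_of_tendsto_rat {Y : Type*} [PseudoMetricSpace Y]
    [CompleteSpace Y] {F : ℕ → ℝ → Y} {K : ℝ≥0} (hF : ∀ n, LipschitzWith K (F n))
    (h : ∀ q : ℚ, ∃ y, Tendsto (fun n => F n q) atTop (𝓝 y)) (t : ℝ) :
    ∃ y, Tendsto (fun n => F n t) atTop (𝓝 y) := by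
  refine cauchySeq_tendsto_of_complete (Metric.cauchySeq_iff.2 fun ε hε => ?_)
  obtain ⟨q, hq⟩ := exists_rat_near t (show 0 < ε / (3 * (K + 1)) by positivity)
  obtain ⟨y, hy⟩ := h q
  obtain ⟨n₀, hn₀⟩ := Metric.cauchySeq_iff.1 hy.cauchySeq (ε / 3) (by positivity)
  have hclose : ∀ n, dist (F n t) (F n q) ≤ ε / 3 := fun n => calc
    dist (F n t) (F n q) ≤ K * |t - q| := by rw [← Real.dist_eq]; exact (hF n).dist_le_mul _ _
    _ ≤ (K + 1) * (ε / (3 * (K + 1))) := by gcongr; linarith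
    _ = ε / 3 := by field_simp
  refine ⟨n₀, fun m hm n hn => ?_⟩
  linarith [dist_triangle4 (F m t) (F m q) (F n q) (F n t), hclose m, hclose n,
    hn₀ m hm n hn, dist_comm (F n t) (F n q)]

/-- A pointwise Arzelà–Ascoli theorem: extract on the rationals by Tychonoff, then
equi-Lipschitz continuity propagates convergence to every real. -/
theorem exists_subseq_tendsto_of_lipschitzWith {Y : Type*} [MetricSpace Y] [ProperSpace Y]
    {F : ℕ → ℝ → Y} {K : ℝ≥0} (hF : ∀ n, LipschitzWith K (F n))
    (h0 : Bornology.IsBounded (Set.range fun n => F n 0)) :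
    ∃ ψ : ℕ → ℕ, StrictMono ψ ∧
      ∃ G : ℝ → Y, ∀ t, Tendsto (fun n => F (ψ n) t) atTop (𝓝 (G t)) := by
  obtain ⟨r, hr⟩ := h0.subset_closedBall (F 0 0)
  have hmem : ∀ n, (fun q : ℚ => F n q) ∈
      Set.univ.pi fun q : ℚ => Metric.closedBall (F 0 0) (K * |(q : ℝ)| + r) := by
    intro n q _
    have h1 : dist (F n q) (F n 0) ≤ K * |(q : ℝ)| := by
      simpa only [Real.dist_eq, sub_zero] using (hF n).dist_le_mul q 0
    have h2 : dist (F n 0) (F 0 0) ≤ r := hr ⟨n, rfl⟩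
    exact (dist_triangle _ _ _).trans (add_le_add h1 h2)
  obtain ⟨g, -, ψ, hψ, hg⟩ :=
    (isCompact_univ_pi fun q : ℚ => isCompact_closedBall _ _).tendsto_subseq hmem
  choose G hG using exists_tendsto_of_lipschitzWith_of_tendsto_rat (fun n => hF (ψ n))
    fun q => ⟨g q, tendsto_pi_nhds.1 hg q⟩
  exact ⟨ψ, hψ, G, hG⟩

theorem exists_subseq_tendsto_intervalIntegral {ι : Type*} [Fintype ι] {c : ℕ → ι → ℝ → ℝ}
    (hc : ∀ n i, Measurable (c n i)) (hc01 : ∀ n i t, c n i t ∈ Set.Icc (0 : ℝ) 1) :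
    ∃ ψ : ℕ → ℕ, StrictMono ψ ∧ ∃ B : ι → ℝ → ℝ,
      (∀ i, Measurable (B i) ∧ ∀ t, B i t ∈ Set.Icc (0 : ℝ) 1) ∧
      ∀ i u v, Tendsto (fun n => ∫ s in u..v, c (ψ n) i s) atTop (𝓝 (∫ s in u..v, B i s)) := by
  have hnorm : ∀ n i t, ‖c n i t‖ ≤ (1 : ℝ≥0) := fun n i t =>
    norm_le_one_of_mem_Icc (hc01 n i t)
  have hint : ∀ n i u v, IntervalIntegrable (c n i) volume u v := fun n i =>
    intervalIntegrable_of_norm_le (hc n i).aestronglyMeasurable (hnorm n i)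
  let P : ℕ → ℝ → ι → ℝ := fun n t i => ∫ s in 0..t, c n i s
  have hP : ∀ n, LipschitzWith 1 (P n) := fun n => LipschitzWith.of_dist_le_mul fun x y =>
    (dist_pi_le_iff (by positivity)).2 fun i =>
      (lipschitzWith_intervalIntegral (hc n i).aestronglyMeasurable (hnorm n i) 0).dist_le_mul x y
  obtain ⟨ψ, hψ, G, hG⟩ := exists_subseq_tendsto_of_lipschitzWith hP
    (by simp [P, Set.range_const])
  have hGi : ∀ i t, Tendsto (fun n => P (ψ n) t i) atTop (𝓝 (G t i)) := fun i t =>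
    tendsto_pi_nhds.1 (hG t) i
  have hGlip : LipschitzWith 1 G := (isClosed_setOfPred_lipschitzWith 1).mem_of_tendsto
    (tendsto_pi_nhds.2 hG) (Eventually.of_forall fun n => hP (ψ n))
  have hlip : ∀ i, LipschitzWith 1 fun t => G t i := fun i =>
    one_mul (1 : ℝ≥0) ▸ (LipschitzWith.eval i).comp hGlip
  have hmono : ∀ i, Monotone fun t => G t i := fun i u v huv =>
    le_of_tendsto_of_tendsto' (hGi i u) (hGi i v) fun n =>
      monotone_intervalIntegral (hint (ψ n) i) (fun t => (hc01 (ψ n) i t).1) 0 huv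
  refine ⟨ψ, hψ, fun i => deriv fun t => G t i, fun i => ⟨measurable_deriv _,
    deriv_mem_Icc_of_monotone_of_lipschitzWith (hmono i) (hlip i)⟩, fun i u v => ?_⟩
  rw [(hlip i).lipschitzOnWith.absolutelyContinuousOnInterval.integral_deriv_eq_sub]
  exact ((hGi i v).sub (hGi i u)).congr fun n =>
    intervalIntegral.integral_interval_sub_left (hint _ i 0 v) (hint _ i 0 u)

theorem abs_intervalIntegral_mul_sub_sum_le {a g : ℝ → ℝ} {C ε h : ℝ}
    (ha : AEStronglyMeasurable a) (haC : ∀ t, ‖a t‖ ≤ C) (hg : Continuous g) (hh : 0 ≤ h)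
    (hgε : ∀ x y, dist x y ≤ h → dist (g x) (g y) ≤ ε) (x₀ : ℝ) (m : ℕ) :
    |(∫ t in x₀..x₀ + m * h, a t * g t) -
        ∑ k ∈ Finset.range m, g (x₀ + k * h) * ∫ t in (x₀ + k * h)..(x₀ + (k + 1) * h), a t| ≤
      C * ε * (m * h) := by
  let node : ℕ → ℝ := fun k => x₀ + k * h
  have hC : 0 ≤ C := (norm_nonneg _).trans (haC 0)
  have hai : ∀ u v, IntervalIntegrable a volume u v := intervalIntegrable_of_norm_le ha haC
  have hagi : ∀ u v, IntervalIntegrable (fun t => a t * g t) volume u v := fun u v =>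
    (hai u v).mul_continuousOn hg.continuousOn
  have hpiece : ∀ k, |(∫ t in node k..node (k + 1), a t * g t) -
      g (node k) * ∫ t in node k..node (k + 1), a t| ≤ C * ε * h := by
    intro k
    have hlen : node (k + 1) - node k = h := by simp only [node]; push_cast; ring
    have hbound := intervalIntegral.norm_integral_le_of_norm_le_const (C := C * ε)
      (a := node k) (b := node (k + 1)) (f := fun t => a t * g t - g (node k) * a t) fun t ht => by
        rw [Set.uIoc_of_le (by linarith)] at ht
        have hdist : dist t (node k) ≤ h := by
          rw [Real.dist_eq, abs_of_nonneg (by linarith [ht.1])]; linarith [ht.2]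
        calc ‖a t * g t - g (node k) * a t‖ = ‖a t‖ * dist (g t) (g (node k)) := by
              rw [Real.dist_eq, ← Real.norm_eq_abs, ← norm_mul, mul_sub, mul_comm (g _)]
          _ ≤ C * ε := mul_le_mul (haC t) (hgε _ _ hdist) dist_nonneg hC
    rwa [hlen, abs_of_nonneg hh, intervalIntegral.integral_sub (hagi _ _)
      ((hai _ _).const_mul _), intervalIntegral.integral_const_mul] at hbound
  have hsplit := intervalIntegral.sum_integral_adjacent_intervals (a := node) (n := m)
    fun k _ => hagi _ _
  simp only [node, Nat.cast_add, Nat.cast_one, CharP.cast_eq_zero, zero_mul, add_zero]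
    at hsplit hpiece
  rw [← hsplit, ← Finset.sum_sub_distrib]
  calc _ ≤ ∑ k ∈ Finset.range m, C * ε * h :=
        (Finset.abs_sum_le_sum_abs _ _).trans (Finset.sum_le_sum fun k _ => hpiece k)
    _ = C * ε * (m * h) := by simp only [Finset.sum_const, Finset.card_range, nsmul_eq_mul]; ring

theorem dist_integral_mul_le {α : Type*} [MeasurableSpace α] {μ : Measure α} {c f g : α → ℝ}
    {C : ℝ} (hc : AEStronglyMeasurable c μ) (hcC : ∀ x, ‖c x‖ ≤ C) (hf : Integrable f μ)
    (hg : Integrable g μ) :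
    dist (∫ x, c x * f x ∂μ) (∫ x, c x * g x ∂μ) ≤ C * ∫ x, ‖f x - g x‖ ∂μ := by
  rw [dist_eq_norm, ← integral_sub (hf.bdd_mul hc (ae_of_all _ hcC))
    (hg.bdd_mul hc (ae_of_all _ hcC)), ← integral_const_mul]
  refine norm_integral_le_of_norm_le ((hf.sub hg).norm.const_mul C) (ae_of_all _ fun x => ?_)
  rw [← mul_sub, norm_mul]
  exact mul_le_mul_of_nonneg_right (hcC x) (norm_nonneg _)

section WeakStar

variable {a : ℕ → ℝ → ℝ} {b : ℝ → ℝ} {C : ℝ}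

/-- Against a continuous compactly supported `g`, compare both sides with Riemann sums of `g`
weighted by interval integrals, which converge by hypothesis. -/
theorem tendsto_integral_mul_of_hasCompactSupport (ha : ∀ n, AEStronglyMeasurable (a n))
    (haC : ∀ n t, ‖a n t‖ ≤ C) (hb : AEStronglyMeasurable b) (hbC : ∀ t, ‖b t‖ ≤ C)
    (h : ∀ u v, Tendsto (fun n => ∫ s in u..v, a n s) atTop (𝓝 (∫ s in u..v, b s)))
    {g : ℝ → ℝ} (hg : Continuous g) (hgs : HasCompactSupport g) :
    Tendsto (fun n => ∫ t, a n t * g t) atTop (𝓝 (∫ t, b t * g t)) := by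
  have hC : 0 ≤ C := (norm_nonneg _).trans (hbC 0)
  obtain ⟨r, hr⟩ := hgs.isBounded.subset_closedBall 0
  set M := max r 0 + 1
  have hM : 0 < M := by positivity
  have hsupp : ∀ c : ℝ → ℝ, ∫ t, c t * g t = ∫ t in (-M)..M, c t * g t := fun c => by
    rw [intervalIntegral.integral_of_le (by linarith),
      setIntegral_eq_integral_of_forall_compl_eq_zero fun t ht => ?_]
    suffices g t = 0 by rw [this, mul_zero]
    refine image_eq_zero_of_notMem_tsupport fun hts => ht ?_
    have := abs_le.1 (by simpa using hr hts : |t| ≤ r)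
    constructor <;> linarith [le_max_left r 0]
  simp only [hsupp]
  refine tendsto_of_forall_dist_le fun ε hε => ?_
  set ε' := ε / (2 * M * (C + 1))
  obtain ⟨δ, hδ, hgδ⟩ := Metric.uniformContinuous_iff_le.1
    (hgs.uniformContinuous_of_continuous hg) ε' (by positivity)
  obtain ⟨m, hm⟩ := exists_nat_gt (2 * M / δ)
  have hm0 : (0 : ℝ) < m := (div_pos (by positivity) hδ).trans hm
  set w := 2 * M / m
  have hwδ : w ≤ δ := by
    rw [div_lt_iff₀ hδ] at hm; rw [div_le_iff₀ hm0]; linarith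
  have hend : -M + m * w = M := by simp only [w]; field_simp; ring
  have hriemann : ∀ c : ℝ → ℝ, AEStronglyMeasurable c → (∀ t, ‖c t‖ ≤ C) →
      dist (∫ t in (-M)..M, c t * g t) (∑ k ∈ Finset.range m,
        g (-M + k * w) * ∫ t in (-M + k * w)..(-M + (k + 1) * w), c t) ≤ ε := by
    intro c hc hcC
    have hsum := abs_intervalIntegral_mul_sub_sum_le hc hcC hg (by positivity)
      (fun x y hxy => hgδ (hxy.trans hwδ)) (-M) m
    rw [hend, show m * w = 2 * M by linarith] at hsum
    rw [Real.dist_eq]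
    refine hsum.trans ?_
    calc C * ε' * (2 * M) = ε * (C / (C + 1)) := by simp only [ε']; field_simp
      _ ≤ ε * 1 := by gcongr; exact (div_le_one (by positivity)).2 (by linarith)
      _ = ε := mul_one ε
  refine ⟨_, _, tendsto_finsetSum _ fun k _ => (h _ _).const_mul _,
    fun n => hriemann _ (ha n) (haC n), ?_⟩
  rw [dist_comm]
  exact hriemann b hb hbC

theorem tendsto_integral_mul_of_integrable (ha : ∀ n, AEStronglyMeasurable (a n))
    (haC : ∀ n t, ‖a n t‖ ≤ C) (hb : AEStronglyMeasurable b) (hbC : ∀ t, ‖b t‖ ≤ C)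
    (h : ∀ u v, Tendsto (fun n => ∫ s in u..v, a n s) atTop (𝓝 (∫ s in u..v, b s)))
    {f : ℝ → ℝ} (hf : Integrable f) :
    Tendsto (fun n => ∫ t, a n t * f t) atTop (𝓝 (∫ t, b t * f t)) := by
  have hC : 0 ≤ C := (norm_nonneg _).trans (hbC 0)
  refine tendsto_of_forall_dist_le fun ε hε => ?_
  obtain ⟨g, hgs, hfg, hg, hgi⟩ :=
    hf.exists_hasCompactSupport_integral_sub_le (show 0 < ε / (C + 1) by positivity)
  have happrox : ∀ c : ℝ → ℝ, AEStronglyMeasurable c → (∀ t, ‖c t‖ ≤ C) →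
      dist (∫ t, c t * f t) (∫ t, c t * g t) ≤ ε := fun c hc hcC => calc
    _ ≤ C * (ε / (C + 1)) := (dist_integral_mul_le hc hcC hf hgi).trans (by gcongr)
    _ ≤ (C + 1) * (ε / (C + 1)) := by gcongr; linarith
    _ = ε := by field_simp
  refine ⟨_, _, tendsto_integral_mul_of_hasCompactSupport ha haC hb hbC h hg hgs,
    fun n => happrox _ (ha n) (haC n), ?_⟩
  rw [dist_comm]
  exact happrox b hb hbC

theorem tendsto_setIntegral_mul_of_integrableOn (ha : ∀ n, AEStronglyMeasurable (a n))
    (haC : ∀ n t, ‖a n t‖ ≤ C) (hb : AEStronglyMeasurable b) (hbC : ∀ t, ‖b t‖ ≤ C)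
    (h : ∀ u v, Tendsto (fun n => ∫ s in u..v, a n s) atTop (𝓝 (∫ s in u..v, b s)))
    {f : ℝ → ℝ} {s : Set ℝ} (hs : MeasurableSet s) (hf : IntegrableOn f s) :
    Tendsto (fun n => ∫ t in s, a n t * f t) atTop (𝓝 (∫ t in s, b t * f t)) := by
  simp only [← integral_indicator hs, Set.indicator_mul_right]
  exact tendsto_integral_mul_of_integrable ha haC hb hbC h (hf.integrable_indicator hs)

end WeakStar

theorem upperSemicontinuous_scrambling {N : ℕ} :
    UpperSemicontinuous (scrambling : (Fin N → Fin N → ℝ) → ℝ) :=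
  upperSemicontinuous_ciInf (fun _ => (Set.finite_range _).bddBelow) fun i =>
    upperSemicontinuous_ciInf (fun _ => (Set.finite_range _).bddBelow) fun j =>
      (by fun_prop : Continuous fun A : Fin N → Fin N → ℝ =>
        (N : ℝ)⁻¹ * ∑ k : Fin N, min (A i k) (A j k)).upperSemicontinuous

theorem le_scrambling_of_tendsto {N : ℕ} {ι : Type*} {l : Filter ι} [l.NeBot]
    {M : ι → Fin N → Fin N → ℝ} {M₀ : Fin N → Fin N → ℝ} {μ : ℝ} (hM : Tendsto M l (𝓝 M₀))
    (hμ : ∀ n, μ ≤ scrambling (M n)) : μ ≤ scrambling M₀ :=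
  (upperSemicontinuous_scrambling.isClosed_preimage μ).mem_of_tendsto hM (Eventually.of_forall hμ)

theorem indicator_Ici_mem_Icc {a : ℝ → ℝ} (ha : ∀ t, 0 ≤ t → a t ∈ Set.Icc (0 : ℝ) 1)
    (t : ℝ) : (Set.Ici 0).indicator a t ∈ Set.Icc (0 : ℝ) 1 := by
  by_cases ht : 0 ≤ t
  · rw [Set.indicator_of_mem (Set.mem_Ici.2 ht)]
    exact ha t ht
  · rw [Set.indicator_of_notMem (by simpa using ht)]
    exact Set.left_mem_Icc.2 zero_le_one

theorem scramblingPersistent_weakStar_seq_compact_general {N : ℕ}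
    (τ μ : ℝ) (hτ : 0 < τ)
    (A : ℕ → Fin N → Fin N → ℝ → ℝ)
    (hA : ∀ n, ScramblingPersistent N τ μ (A n)) :
    ∃ ψ : ℕ → ℕ, StrictMono ψ ∧
      ∃ B : Fin N → Fin N → ℝ → ℝ, ScramblingPersistent N τ μ B ∧
        ∀ i j : Fin N, ∀ f : ℝ → ℝ, IntegrableOn f (Set.Ici (0 : ℝ)) →
          Filter.Tendsto (fun n => ∫ t in Set.Ici (0 : ℝ), A (ψ n) i j t * f t)
            Filter.atTop (nhds (∫ t in Set.Ici (0 : ℝ), B i j t * f t)) := by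
  -- Truncating at `t = 0` makes the signals `[0,1]`-valued on all of `ℝ` without changing
  -- anything the statement looks at.
  let c : ℕ → Fin N × Fin N → ℝ → ℝ := fun n p => (Set.Ici 0).indicator (A n p.1 p.2)
  have hc : ∀ n p, Measurable (c n p) := fun n p =>
    ((hA n).1 p.1 p.2).1.indicator measurableSet_Ici
  have hc01 : ∀ n p t, c n p t ∈ Set.Icc (0 : ℝ) 1 := fun n p =>
    indicator_Ici_mem_Icc ((hA n).1 p.1 p.2).2
  have hcA : ∀ n i j, Set.EqOn (c n (i, j)) (A n i j) (Set.Ici 0) := fun n i j t ht =>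
    Set.indicator_of_mem ht _
  obtain ⟨ψ, hψ, B, hB, hconv⟩ := exists_subseq_tendsto_intervalIntegral hc hc01
  refine ⟨ψ, hψ, fun i j => B (i, j),
    ⟨fun i j => ⟨(hB (i, j)).1, fun t _ => (hB (i, j)).2 t⟩, fun t ht => ?_⟩, fun i j f hf => ?_⟩
  · have hwindow : ∀ n i j, ∫ s in t..t + τ, A n i j s = ∫ s in t..t + τ, c n (i, j) s :=
      fun n i j => intervalIntegral.integral_congr fun s hs => by
        rw [Set.uIcc_of_le (by linarith)] at hs
        exact (hcA n i j (ht.trans hs.1)).symm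
    refine le_scrambling_of_tendsto (tendsto_pi_nhds.2 fun i => tendsto_pi_nhds.2 fun j =>
      (hconv (i, j) t (t + τ)).const_mul τ⁻¹) fun n => ?_
    simpa only [hwindow] using (hA (ψ n)).2 t ht
  · have hB1 : ∀ t, ‖B (i, j) t‖ ≤ 1 := fun t => norm_le_one_of_mem_Icc ((hB (i, j)).2 t)
    refine (tendsto_setIntegral_mul_of_integrableOn (fun n => (hc _ _).aestronglyMeasurable)
        (fun n t => norm_le_one_of_mem_Icc (hc01 (ψ n) (i, j) t))
        (hB (i, j)).1.aestronglyMeasurable hB1 (hconv (i, j)) measurableSet_Ici hf).congr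
      fun n => setIntegral_congr_fun measurableSet_Ici fun t ht => by rw [hcA _ i j ht]

/-- sequential weak-* compactness of the set of scrambling-persistent signals:
any sequence admits a subsequence converging, tested against every `L¹` function on `[0,∞)`
entrywise, to a scrambling-persistent signal. -/
theorem scramblingPersistent_weakStar_seq_compact {N : ℕ} (hN : 1 ≤ N)
    (τ μ : ℝ) (hτ : 0 < τ) (hμ : μ ∈ Set.Ioc (0 : ℝ) 1)
    (A : ℕ → Fin N → Fin N → ℝ → ℝ)
    (hA : ∀ n, ScramblingPersistent N τ μ (A n)) :
    ∃ ψ : ℕ → ℕ, StrictMono ψ ∧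
      ∃ B : Fin N → Fin N → ℝ → ℝ, ScramblingPersistent N τ μ B ∧
        ∀ i j : Fin N, ∀ f : ℝ → ℝ, IntegrableOn f (Set.Ici (0 : ℝ)) →
          Filter.Tendsto (fun n => ∫ t in Set.Ici (0 : ℝ), A (ψ n) i j t * f t)
            Filter.atTop (nhds (∫ t in Set.Ici (0 : ℝ), B i j t * f t)) :=
  scramblingPersistent_weakStar_seq_compact_general τ μ hτ A hA
end
end

section
/- Fix τ > 0 and μ ∈ (0,1]. Let x(·) be a solution of the linear balanced multiagent system driven by a signal A(·) ∈ G_{λ₂}(τ,μ), and suppose that all agents are stationary on some window [t, t+τ], i.e. x_i(s) = x_i(t) for all s ∈ [t, t+τ] and all i. Then V(x(t)) = 0, i.e. all agents coincide at time t. -/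
open MeasureTheory Finset

/-!
On a stationary window the equation forces `∑ⱼ aᵢⱼ(s) (yⱼ - yᵢ) = 0` for a.e. `s`, where
`y = x(t)` is the stationary configuration; integrating, the same holds for the window average
`B` of the signal, which is again balanced. For balanced weights the quadratic form
`∑ᵢⱼ Bᵢⱼ ‖yᵢ - yⱼ‖²` equals `-2 ∑ᵢ ⟪yᵢ, ∑ⱼ Bᵢⱼ (yⱼ - yᵢ)⟫`, so it vanishes at `y`. A positive
variance of `y` would then force `λ₂(B) ≤ 0 < μ`.
-/

section Algebra

variable {E : Type*} [NormedAddCommGroup E] [InnerProductSpace ℝ E]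

theorem IsBalanced.sum_mul_norm_sub_sq {N : ℕ} {B : Fin N → Fin N → ℝ} (hB : IsBalanced B)
    (y : Fin N → E) :
    ∑ i, ∑ j, B i j * ‖y i - y j‖ ^ 2 = -2 * ∑ i, inner ℝ (y i) (∑ j, B i j • (y j - y i)) := by
  have hdeg : ∑ i, ∑ j, B i j * ‖y j‖ ^ 2 = ∑ i, ∑ j, B i j * ‖y i‖ ^ 2 := by
    rw [Finset.sum_comm]
    simp only [← Finset.sum_mul]
    exact Finset.sum_congr rfl fun i _ => by rw [hB i]
  simp only [inner_sum, inner_smul_right, inner_sub_right, real_inner_self_eq_norm_sq,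
    norm_sub_sq_real, mul_add, mul_sub, Finset.sum_add_distrib, Finset.sum_sub_distrib, hdeg,
    mul_left_comm _ (2 : ℝ), ← Finset.mul_sum]
  ring

theorem IsBalanced.sum_mul_norm_sub_sq_eq_zero {N : ℕ} {B : Fin N → Fin N → ℝ}
    (hB : IsBalanced B) {y : Fin N → E} (hy : ∀ i, ∑ j, B i j • (y j - y i) = 0) :
    ∑ i, ∑ j, B i j * ‖y i - y j‖ ^ 2 = 0 := by
  simp [hB.sum_mul_norm_sub_sq, hy]

end Algebra

theorem mVar_nonneg {N d : ℕ} (x : Fin N → EuclideanSpace ℝ (Fin d)) : 0 ≤ mVar x := by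
  unfold mVar
  positivity

theorem lambda2_nonpos_of_sum_mul_norm_sub_sq_eq_zero {N d : ℕ} {A : Fin N → Fin N → ℝ}
    {x : Fin N → EuclideanSpace ℝ (Fin d)} (hx : 0 < mVar x)
    (hA : ∑ i, ∑ j, A i j * ‖x i - x j‖ ^ 2 = 0) : lambda2 d A ≤ 0 := by
  refine Real.sSup_nonpos fun lam hlam => ?_
  have hlamx := hlam x
  rw [hA, mul_zero] at hlamx
  exact nonpos_of_mul_nonpos_left hlamx hx

theorem ValidSignal.intervalIntegrable {N : ℕ} {a : Fin N → Fin N → ℝ → ℝ}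
    (ha : ValidSignal N a) (i j : Fin N) {t u : ℝ} (ht : 0 ≤ t) (hu : 0 ≤ u) :
    IntervalIntegrable (a i j) volume t u := by
  refine (intervalIntegrable_const (c := (1 : ℝ))).mono_fun
    (ha i j).1.aestronglyMeasurable (ae_restrict_of_forall_mem measurableSet_uIoc fun s hs => ?_)
  have hs0 : 0 ≤ s := (le_min ht hu).trans hs.1.le
  obtain ⟨h0, h1⟩ := (ha i j).2 s hs0
  simpa [abs_of_nonneg h0] using h1

theorem isBalanced_intervalIntegral {N : ℕ} {a : Fin N → Fin N → ℝ → ℝ} {t u : ℝ}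
    (ha : ∀ i j, IntervalIntegrable (a i j) volume t u)
    (hbal : ∀ᵐ s, s ∈ Set.uIoc t u → IsBalanced fun i j => a i j s) :
    IsBalanced fun i j => ∫ s in t..u, a i j s := by
  intro i
  simp only [← intervalIntegral.integral_finsetSum fun j _ => ha i j,
    ← intervalIntegral.integral_finsetSum fun j _ => ha j i]
  exact intervalIntegral.integral_congr_ae (hbal.mono fun s hs hmem => hs hmem i)

theorem sum_integral_smul_eq_zero {ι E : Type*} [Fintype ι] [NormedAddCommGroup E]
    [NormedSpace ℝ E] [CompleteSpace E] {f : ι → ℝ → ℝ} {v : ι → E} {t u : ℝ} (htu : t ≤ u)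
    (hf : ∀ j, IntervalIntegrable (f j) volume t u)
    (h0 : ∀ᵐ s, s ∈ Set.Ioo t u → ∑ j, f j s • v j = 0) :
    ∑ j, (∫ s in t..u, f j s) • v j = 0 := by
  simp only [← intervalIntegral.integral_smul_const]
  rw [← intervalIntegral.integral_finsetSum fun j _ =>
    ⟨(hf j).1.smul_const (v j), (hf j).2.smul_const (v j)⟩,
    intervalIntegral.integral_of_le htu, integral_Ioc_eq_integral_Ioo]
  exact setIntegral_eq_zero_of_ae_eq_zero h0

theorem IsLinSol.ae_sum_smul_sub_eq_zero_of_stationary {N d : ℕ} {a : Fin N → Fin N → ℝ → ℝ}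
    {x : Fin N → ℝ → EuclideanSpace ℝ (Fin d)} (hx : IsLinSol a x) {t u : ℝ} (ht : 0 ≤ t)
    (hstat : ∀ i, ∀ s ∈ Set.Icc t u, x i s = x i t) :
    ∀ᵐ s, s ∈ Set.Ioo t u → ∀ i, ∑ j, a i j s • (x j t - x i t) = 0 := by
  filter_upwards [hx.2] with s hs hsmem i
  have hconst : HasDerivAt (x i) 0 s := by
    refine (hasDerivAt_const s (x i t)).congr_of_eventuallyEq ?_
    filter_upwards [Ioo_mem_nhds hsmem.1 hsmem.2] with r hr
    exact hstat i r (Set.Ioo_subset_Icc_self hr)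
  have hN : ((N : ℝ))⁻¹ ≠ 0 := inv_ne_zero (Nat.cast_ne_zero.2 (Fin.pos i).ne')
  have hsum := (smul_eq_zero.1 ((hs (ht.trans hsmem.1.le) i).unique hconst)).resolve_left hN
  simpa only [hstat _ s (Set.Ioo_subset_Icc_self hsmem)] using hsum

theorem stationary_window_implies_consensus_general {N d : ℕ}
    (τ μ : ℝ) (hτ : 0 < τ) (hμ : μ ∈ Set.Ioc (0 : ℝ) 1)
    (a : Fin N → Fin N → ℝ → ℝ) (ha : ConnectivityPersistent N d τ μ a)
    (x : Fin N → ℝ → EuclideanSpace ℝ (Fin d)) (hx : IsLinSol a x)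
    (t : ℝ) (ht : 0 ≤ t)
    (hstat : ∀ i : Fin N, ∀ s ∈ Set.Icc t (t + τ), x i s = x i t) :
    mVar (fun i => x i t) = 0 := by
  obtain ⟨hsig, hbal, hconn⟩ := ha
  have htu : t ≤ t + τ := by linarith
  have hint : ∀ i j, IntervalIntegrable (a i j) volume t (t + τ) := fun i j =>
    hsig.intervalIntegrable i j ht (ht.trans htu)
  have hBbal : IsBalanced fun i j => ∫ s in t..t + τ, a i j s :=
    isBalanced_intervalIntegral hint <| hbal.mono fun s hs hmem =>
      hs ((le_min ht (ht.trans htu)).trans hmem.1.le)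
  have hBeq : ∀ i, ∑ j, (∫ s in t..t + τ, a i j s) • (x j t - x i t) = 0 := fun i =>
    sum_integral_smul_eq_zero htu (hint i) <|
      (hx.ae_sum_smul_sub_eq_zero_of_stationary ht hstat).mono fun s hs hmem => hs hmem i
  have hform : ∑ i, ∑ j, (τ⁻¹ * ∫ s in t..t + τ, a i j s) * ‖x i t - x j t‖ ^ 2 = 0 := by
    simp only [mul_assoc, ← Finset.mul_sum, hBbal.sum_mul_norm_sub_sq_eq_zero hBeq, mul_zero]
  by_contra hV
  exact (hμ.1.trans_le (hconn t ht)).not_ge <|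
    lambda2_nonpos_of_sum_mul_norm_sub_sq_eq_zero ((mVar_nonneg _).lt_of_ne' hV) hform

/-- if all agents of a solution of the linear balanced system driven by a
connectivity-persistent signal are stationary on a window `[t, t+τ]`, then the variance
vanishes at time `t`, i.e. all agents coincide. -/
theorem stationary_window_implies_consensus {N d : ℕ} (hN : 1 ≤ N)
    (τ μ : ℝ) (hτ : 0 < τ) (hμ : μ ∈ Set.Ioc (0 : ℝ) 1)
    (a : Fin N → Fin N → ℝ → ℝ) (ha : ConnectivityPersistent N d τ μ a)
    (x : Fin N → ℝ → EuclideanSpace ℝ (Fin d)) (hx : IsLinSol a x)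
    (t : ℝ) (ht : 0 ≤ t)
    (hstat : ∀ i : Fin N, ∀ s ∈ Set.Icc t (t + τ), x i s = x i t) :
    mVar (fun i => x i t) = 0 :=
  stationary_window_implies_consensus_general τ μ hτ hμ a ha x hx t ht hstat
end
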